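/- Let 𝒯 be a family of subsets of S containing a countable subset separating points of S, and let ℋ be a semiring of subsets of S. Then 𝒞(𝒯) ⊆ 𝒞(ℋ) if and only if every element of 𝒯 is a countable union of sets in ℋ. -/

import Mathlib

open MeasureTheory Filter

/-- The space of countable subsets of `S`. -/
def CS (S : Type*) : Type _ := {M : Set S // M.Countable}

/-- The counting map `N_A : C(S) → ℕ₀ ∪ {∞}`, `M ↦ |M ∩ A|`. -/
noncomputable def NA {S : Type*} (A : Set S) (M : CS S) : ℕ∞ := (M.1 ∩ A).encard

/-- The counting σ-field `𝒞(𝒯)` on `C(S)`: the smallest σ-field making every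
`N_A`, `A ∈ 𝒯`, measurable. -/
noncomputable def countingSigma {S : Type*} (T : Set (Set S)) : MeasurableSpace (CS S) :=
  ⨆ A ∈ T, MeasurableSpace.comap (NA A) ⊤

/-- The hit-or-miss σ-field `𝔥(ℰ)` on `C(S)`. -/
def hitOrMiss {S : Type*} (E : Set (Set S)) : MeasurableSpace (CS S) :=
  MeasurableSpace.generateFrom ((fun A => {M : CS S | (M.1 ∩ A).Nonempty}) '' E)

/-- The counting σ-field `𝒞(𝒮)` of the full σ-field of the state space. -/
noncomputable def countingSigmaField (S : Type*) [MeasurableSpace S] : MeasurableSpace (CS S) :=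
  countingSigma {A : Set S | MeasurableSet A}

/-!
For `⇐`, split each `A ∈ 𝒯` into a countable disjoint family `V ⊆ ℋ` (possible in a semiring); then
`N_A = ∑_{B ∈ V} N_B` is `𝒞(ℋ)`-measurable.

For `⇒`, every `𝒞(ℋ)`-measurable set is already `𝒞(𝒢)`-measurable for a countable `𝒢 ⊆ ℋ`, and
enlarging `𝒢` we may assume that the hitting events `{M | M ∩ A ≠ ∅}` of `A` and of the members of
the countable separating subfamily of `𝒯` are `𝒞(𝒢)`-measurable. Comparing singletons shows that `𝒢`
separates points. Enumerate `𝒢 = {g₀, g₁, …}`. For `x ∈ A`, some atom of the partition generated by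
`g₀, …, gₙ₋₁` around `x` lies in `A`: otherwise pick `yₙ ∉ A` in the `n`-th atom of `x`; the
configurations `{x} ∪ {yₙ}` and `{yₙ}` have the same counts in every `gᵢ` (both infinite when
`x ∈ gᵢ`: all `yₙ` with `n > i` lie in `gᵢ`, and they take infinitely many values because `𝒢`
separates points), yet only the first one hits `A`. Intersected with a member of `𝒢`
containing `x`, such an atom lies in the ring generated by `ℋ`, hence is a finite union of members
of `ℋ`, and there are only countably many atoms.
-/

open Set
open scoped ENNReal

theorem Set.toENNReal_encard_iUnion {α ι : Type*} [Countable ι] {s : ι → Set α}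
    (hs : Pairwise (Function.onFun Disjoint s)) :
    ((⋃ i, s i).encard : ℝ≥0∞) = ∑' i, ((s i).encard : ℝ≥0∞) := by
  let _ : MeasurableSpace α := ⊤
  simp_rw [← Measure.count_apply MeasurableSpace.measurableSet_top]
  exact measure_iUnion hs fun _ => MeasurableSpace.measurableSet_top

theorem Finpartition.sUnion_parts {α : Type*} {s : Set α} (P : Finpartition s) :
    ⋃₀ (P.parts : Set (Set α)) = s := by
  rw [← Finset.sup_id_set_eq_sUnion, P.sup_parts]

theorem Set.Countable.exists_countable_sUnion_eq {α : Type*} {H 𝒲 : Set (Set α)}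
    (h𝒲 : 𝒲.Countable) (h : ∀ W ∈ 𝒲, ∃ U ⊆ H, U.Countable ∧ W = ⋃₀ U) :
    ∃ U ⊆ H, U.Countable ∧ ⋃₀ 𝒲 = ⋃₀ U := by
  choose! U hUH hU hWU using h
  refine ⟨⋃ W ∈ 𝒲, U W, iUnion₂_subset hUH, h𝒲.biUnion hU, ?_⟩
  simp_rw [sUnion_eq_biUnion (s := 𝒲), sUnion_iUnion]
  exact iUnion₂_congr hWU

theorem MeasureTheory.IsSetSemiring.exists_pairwiseDisjoint_sUnion_eq {α : Type*}
    {C U : Set (Set α)} (hC : IsSetSemiring C) (hUC : U ⊆ C) (hU : U.Countable) :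
    ∃ V ⊆ C, V.Countable ∧ V.PairwiseDisjoint id ∧ ⋃₀ V = ⋃₀ U := by
  obtain ⟨u, hu⟩ := (hU.insert ∅).exists_eq_range (insert_nonempty _ _)
  have huC : ∀ n, u n ∈ supClosure C := fun n =>
    subset_supClosure (insert_subset hC.empty_mem hUC (hu ▸ mem_range_self n))
  choose P hPC using fun n =>
    hC.mem_supClosure_iff.1 (hC.isSetRing_supClosure.disjointed_mem huC n)
  refine ⟨⋃ n, (P n).parts, iUnion_subset hPC,
    countable_iUnion fun n => (P n).parts.countable_toSet, ?_, ?_⟩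
  · simp only [PairwiseDisjoint, Set.Pairwise, mem_iUnion, Finset.mem_coe]
    rintro B ⟨n, hB⟩ B' ⟨m, hB'⟩ hne
    obtain rfl | hnm := eq_or_ne n m
    · exact (P n).disjoint hB hB' hne
    · exact (disjoint_disjointed u hnm).mono ((P n).le hB) ((P m).le hB')
  · simp_rw [sUnion_iUnion, Finpartition.sUnion_parts, iUnion_disjointed, ← sUnion_range, ← hu,
      sUnion_insert, empty_union]

theorem MeasureTheory.IsSetRing.inter_mem_of_mem_memPartition {α : Type*} {R : Set (Set α)}
    (hR : IsSetRing R) {g : ℕ → Set α} (hg : ∀ i, g i ∈ R) {B : Set α} (hB : B ∈ R) {n : ℕ}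
    {u : Set α} (hu : u ∈ memPartition g n) : B ∩ u ∈ R := by
  induction n generalizing u with
  | zero => simpa [(mem_singleton_iff.1 hu : u = univ)]
  | succ n ih =>
    obtain ⟨u', hu', rfl | rfl⟩ := hu
    · rw [← inter_assoc]; exact hR.inter_mem (ih hu') (hg n)
    · rw [← inter_sdiff_assoc]; exact hR.sdiff_mem (ih hu') (hg n)

theorem mem_memPartitionSet_iff {α : Type*} {g : ℕ → Set α} {n : ℕ} {x y : α} :
    y ∈ memPartitionSet g n x ↔ ∀ i < n, (y ∈ g i ↔ x ∈ g i) := by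
  classical
  induction n with
  | zero => simp
  | succ n ih =>
    rw [memPartitionSet_succ]
    split_ifs with hx <;>
      simp only [mem_inter_iff, Set.mem_sdiff, ih, Nat.lt_succ_iff, le_iff_lt_or_eq, or_imp,
        forall_and, forall_eq, hx, iff_true, iff_false]

theorem Set.infinite_range_of_forall_lt_mem_iff {α : Type*} {g : ℕ → Set α}
    (hsep : ∀ z w, (∀ i, z ∈ g i ↔ w ∈ g i) → z = w) {x : α} {y : ℕ → α}
    (hy : ∀ n, ∀ i < n, (y n ∈ g i ↔ x ∈ g i)) (hyx : ∀ n, y n ≠ x) : (range y).Infinite := by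
  intro hfin
  have := hfin.to_subtype
  obtain ⟨z, hz⟩ := Finite.exists_infinite_fiber (rangeFactorization y)
  have hfib : (rangeFactorization y ⁻¹' {z}).Infinite := infinite_coe_iff.1 hz
  have hyz : ∀ n ∈ rangeFactorization y ⁻¹' {z}, y n = z := fun n hn => congrArg Subtype.val hn
  obtain ⟨n, hn⟩ := hfib.nonempty
  refine hyx n ((hyz n hn).trans (hsep _ _ fun i => ?_))
  obtain ⟨m, hm, him⟩ := hfib.exists_gt i
  rw [← hyz m hm]
  exact hy m i him

theorem exists_countable_measurableSet_biSup {X ι : Type*}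
    {m : ι → MeasurableSpace X} {s : Set ι} {E : Set X} (hE : MeasurableSet[⨆ i ∈ s, m i] E) :
    ∃ t ⊆ s, t.Countable ∧ MeasurableSet[⨆ i ∈ t, m i] E := by
  -- The sets measurable for some countable subfamily form a σ-algebra containing every `m i`.
  let m' : MeasurableSpace X :=
    { MeasurableSet' := fun E => ∃ t ⊆ s, t.Countable ∧ MeasurableSet[⨆ i ∈ t, m i] E
      measurableSet_empty :=
        ⟨∅, empty_subset s, countable_empty, MeasurableSpace.measurableSet_empty _⟩
      measurableSet_compl := fun _ ⟨t, hts, ht, hE⟩ => ⟨t, hts, ht, hE.compl⟩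
      measurableSet_iUnion := fun f hf => by
        choose t hts ht hf using hf
        exact ⟨⋃ n, t n, iUnion_subset hts, countable_iUnion ht,
          .iUnion fun n => (biSup_mono (subset_iUnion t n) :
            ⨆ i ∈ t n, m i ≤ ⨆ i ∈ ⋃ n, t n, m i) _ (hf n)⟩ }
  have hle : ⨆ i ∈ s, m i ≤ m' := iSup₂_le fun i hi E hE =>
    ⟨{i}, singleton_subset_iff.2 hi, countable_singleton i,
      le_iSup₂ (f := fun j (_ : j ∈ ({i} : Set ι)) => m j) i rfl _ hE⟩
  exact hle E hE

section CountingSigma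

variable {S : Type*}

def CS.singleton (x : S) : CS S := ⟨{x}, countable_singleton x⟩

theorem NA_singleton (B : Set S) (x : S) [Decidable (x ∈ B)] :
    NA B (CS.singleton x) = if x ∈ B then 1 else 0 := by
  split_ifs with hx <;> simp [NA, CS.singleton, hx]

theorem countingSigma_le_iff {T : Set (Set S)} {m : MeasurableSpace (CS S)} :
    countingSigma T ≤ m ↔ ∀ A ∈ T, Measurable[m] (NA A) := by
  simp only [countingSigma, iSup₂_le_iff, measurable_iff_comap_le]
  rfl

theorem measurable_NA {T : Set (Set S)} {A : Set S} (hA : A ∈ T) :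
    Measurable[countingSigma T] (NA A) :=
  countingSigma_le_iff.1 le_rfl A hA

theorem countingSigma_mono {T T' : Set (Set S)} (h : T ⊆ T') :
    countingSigma T ≤ countingSigma T' :=
  biSup_mono h

theorem measurable_NA_sUnion {V : Set (Set S)} {m : MeasurableSpace (CS S)} (hV : V.Countable)
    (hVdisj : V.PairwiseDisjoint id) (hVm : ∀ B ∈ V, Measurable[m] (NA B)) :
    Measurable[m] (NA (⋃₀ V)) := by
  have := hV.to_subtype
  have hsum : (fun M => (NA (⋃₀ V) M : ℝ≥0∞)) = fun M => ∑' B : V, (NA B M : ℝ≥0∞) := by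
    funext M
    rw [NA, sUnion_eq_iUnion, inter_iUnion, Set.toENNReal_encard_iUnion]
    · rfl
    · exact fun B B' hne => (hVdisj B.2 B'.2 (Subtype.coe_ne_coe.2 hne)).mono
        inter_subset_right inter_subset_right
  have hmeas : Measurable[m] fun M => (NA (⋃₀ V) M : ℝ≥0∞) :=
    hsum ▸ Measurable.tsum fun B => Measurable.of_discrete.comp (hVm B B.2)
  refine measurable_to_countable' fun k => ?_
  have hk : NA (⋃₀ V) ⁻¹' {k} = (fun M => (NA (⋃₀ V) M : ℝ≥0∞)) ⁻¹' {(k : ℝ≥0∞)} := by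
    ext; simp
  exact hk ▸ hmeas (measurableSet_singleton _)

theorem measurableSet_inter_nonempty {T : Set (Set S)} {A : Set S} (hA : A ∈ T) :
    MeasurableSet[countingSigma T] {M : CS S | (M.1 ∩ A).Nonempty} := by
  have : {M : CS S | (M.1 ∩ A).Nonempty} = NA A ⁻¹' {0}ᶜ := by
    ext M; simp [NA, nonempty_iff_ne_empty]
  exact this ▸ measurable_NA hA (measurableSet_singleton 0).compl

theorem mem_iff_mem_of_NA_eq {G : Set (Set S)} {E : Set (CS S)}
    (hE : MeasurableSet[countingSigma G] E) {M M' : CS S} (h : ∀ B ∈ G, NA B M = NA B M') :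
    M ∈ E ↔ M' ∈ E := by
  let counts : CS S → G → ℕ∞ := fun M B => NA B M
  have hle : countingSigma G ≤ MeasurableSpace.comap counts ⊤ := countingSigma_le_iff.2
    fun B hB => (measurable_from_top (f := fun c : G → ℕ∞ => c ⟨B, hB⟩)).comp
      (comap_measurable counts)
  obtain ⟨V, -, rfl⟩ := hle E hE
  change counts M ∈ V ↔ counts M' ∈ V
  rw [show counts M = counts M' from funext fun B => h B B.2]

theorem mem_iff_mem_of_measurableSet_inter_nonempty {G : Set (Set S)} {A : Set S}
    (hA : MeasurableSet[countingSigma G] {M : CS S | (M.1 ∩ A).Nonempty}) {x y : S}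
    (hxy : ∀ B ∈ G, x ∈ B ↔ y ∈ B) : x ∈ A ↔ y ∈ A := by
  classical
  have h := mem_iff_mem_of_NA_eq hA (M := .singleton x) (M' := .singleton y)
    fun B hB => by simp only [NA_singleton, hxy B hB]
  exact singleton_inter_nonempty.symm.trans (h.trans singleton_inter_nonempty)

theorem exists_mem_of_measurableSet_inter_nonempty {G : Set (Set S)} {A : Set S}
    (hA : MeasurableSet[countingSigma G] {M : CS S | (M.1 ∩ A).Nonempty}) {x : S} (hx : x ∈ A) :
    ∃ B ∈ G, x ∈ B := by
  classical
  by_contra! hxG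
  have h := mem_iff_mem_of_NA_eq hA (M := .singleton x) (M' := ⟨∅, countable_empty⟩)
    fun B hB => by
      rw [NA_singleton, if_neg (hxG B hB)]
      exact (encard_empty (α := S) ▸ congrArg encard (empty_inter B)).symm
  exact (h.1 (singleton_inter_nonempty.2 hx)).ne_empty (empty_inter A)

theorem NA_insert_range_eq {g : ℕ → Set S} {x : S} {y : ℕ → S}
    (hy : ∀ n, ∀ i < n, (y n ∈ g i ↔ x ∈ g i)) (hinf : (range y).Infinite) (i : ℕ) :
    NA (g i) ⟨insert x (range y), (countable_range y).insert x⟩ =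
      NA (g i) ⟨range y, countable_range y⟩ := by
  by_cases hx : x ∈ g i
  · have htail : range y \ y '' Iic i ⊆ range y ∩ g i := by
      rintro _ ⟨⟨m, rfl⟩, hm⟩
      exact ⟨mem_range_self m, (hy m i (not_le.1 fun him => hm ⟨m, him, rfl⟩)).2 hx⟩
    have hinf' : (range y ∩ g i).Infinite :=
      (hinf.sdiff ((finite_Iic i).image y)).mono htail
    exact ((hinf'.mono (inter_subset_inter_left _ (subset_insert _ _))).encard_eq).trans
      hinf'.encard_eq.symm
  · exact congrArg encard (insert_inter_of_notMem hx)

theorem exists_memPartitionSet_subset {g : ℕ → Set S} {A : Set S}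
    (hA : MeasurableSet[countingSigma (range g)] {M : CS S | (M.1 ∩ A).Nonempty})
    (hsep : ∀ z w, (∀ i, z ∈ g i ↔ w ∈ g i) → z = w) {x : S} (hx : x ∈ A) :
    ∃ n, memPartitionSet g n x ⊆ A := by
  by_contra! h
  choose y hy hyA using fun n => not_subset.1 (h n)
  have hy' : ∀ n, ∀ i < n, (y n ∈ g i ↔ x ∈ g i) := fun n => mem_memPartitionSet_iff.1 (hy n)
  have hinf := infinite_range_of_forall_lt_mem_iff hsep hy' fun n hn => hyA n (hn ▸ hx)
  have hhit := mem_iff_mem_of_NA_eq hA (M := ⟨insert x (range y), (countable_range y).insert x⟩)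
    (M' := ⟨range y, countable_range y⟩) (forall_mem_range.2 (NA_insert_range_eq hy' hinf))
  obtain ⟨_, ⟨n, rfl⟩, hn⟩ := hhit.1 ⟨x, mem_insert x _, hx⟩
  exact hyA n hn

theorem exists_countable_sUnion_eq_of_measurableSet {H : Set (Set S)} (hH : IsSetSemiring H)
    {g : ℕ → Set S} (hg : ∀ i, g i ∈ H) (hsep : ∀ z w, (∀ i, z ∈ g i ↔ w ∈ g i) → z = w)
    {A : Set S} (hA : MeasurableSet[countingSigma (range g)] {M : CS S | (M.1 ∩ A).Nonempty}) :
    ∃ U ⊆ H, U.Countable ∧ A = ⋃₀ U := by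
  set 𝒲 := {W | W ⊆ A ∧ ∃ j n, ∃ u ∈ memPartition g n, W = g j ∩ u}
  have hA𝒲 : A = ⋃₀ 𝒲 := by
    refine (sUnion_subset fun W hW => hW.1).antisymm' fun x hx => ?_
    obtain ⟨_, ⟨j, rfl⟩, hxj⟩ := exists_mem_of_measurableSet_inter_nonempty hA hx
    obtain ⟨n, hn⟩ := exists_memPartitionSet_subset hA hsep hx
    exact ⟨g j ∩ memPartitionSet g n x, ⟨inter_subset_right.trans hn, j, n, _,
      memPartitionSet_mem g n x, rfl⟩, hxj, mem_memPartitionSet g n x⟩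
  have h𝒲 : 𝒲.Countable := by
    refine Countable.mono ?_ (countable_iUnion fun j => countable_iUnion fun n =>
      ((finite_memPartition g n).image (g j ∩ ·)).countable)
    rintro _ ⟨-, j, n, u, hu, rfl⟩
    exact mem_iUnion₂.2 ⟨j, n, u, hu, rfl⟩
  rw [hA𝒲]
  refine h𝒲.exists_countable_sUnion_eq fun W ⟨_, j, n, u, hu, hW⟩ => ?_
  obtain ⟨P, hPH⟩ := hH.mem_supClosure_iff.1 <| hW ▸
    hH.isSetRing_supClosure.inter_mem_of_mem_memPartition (fun i => subset_supClosure (hg i))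
      (subset_supClosure (hg j)) hu
  exact ⟨P.parts, hPH, P.parts.countable_toSet, P.sUnion_parts.symm⟩

theorem exists_countable_sUnion_eq_of_countingSigma_le {T H : Set (Set S)}
    (hsep : ∃ D ⊆ T, D.Countable ∧ ∀ x y : S, x ≠ y → ∃ A ∈ D, Xor (x ∈ A) (y ∈ A))
    (hH : IsSetSemiring H) (hle : countingSigma T ≤ countingSigma H) {A : Set S} (hA : A ∈ T) :
    ∃ U ⊆ H, U.Countable ∧ A = ⋃₀ U := by
  obtain ⟨D, hDT, hD, hDsep⟩ := hsep
  choose! G hGH hG hGA using fun A' (hA' : A' ∈ insert A D) =>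
    exists_countable_measurableSet_biSup (hle _ (measurableSet_inter_nonempty
      (insert_subset hA hDT hA')))
  obtain ⟨g, hg⟩ := (((hD.insert A).biUnion hG).insert ∅).exists_eq_range (insert_nonempty _ _)
  have hgH : ∀ i, g i ∈ H := fun i =>
    insert_subset hH.empty_mem (iUnion₂_subset hGH) (hg ▸ mem_range_self i)
  have hgA : ∀ A' ∈ insert A D,
      MeasurableSet[countingSigma (range g)] {M : CS S | (M.1 ∩ A').Nonempty} := fun A' hA' =>
    countingSigma_mono (hg ▸ (subset_biUnion_of_mem hA').trans (subset_insert _ _)) _ (hGA A' hA')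
  refine exists_countable_sUnion_eq_of_measurableSet hH hgH (fun z w hzw => ?_)
    (hgA A (mem_insert A D))
  by_contra hne
  obtain ⟨A', hA', hxor⟩ := hDsep z w hne
  exact (xor_iff_not_iff _ _).1 hxor (mem_iff_mem_of_measurableSet_inter_nonempty
    (hgA A' (mem_insert_of_mem A hA')) (forall_mem_range.2 hzw))

end CountingSigma

theorem countingSigma_le_semiring_iff {S : Type*}
    (T : Set (Set S))
    (hsep : ∃ D ⊆ T, D.Countable ∧ ∀ x y : S, x ≠ y → ∃ A ∈ D, Xor' (x ∈ A) (y ∈ A))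
    (H : Set (Set S)) (hH : MeasureTheory.IsSetSemiring H) :
    countingSigma T ≤ countingSigma H ↔
      ∀ A ∈ T, ∃ U ⊆ H, U.Countable ∧ A = ⋃₀ U := by
  refine ⟨fun hle A hA => exists_countable_sUnion_eq_of_countingSigma_le hsep hH hle hA,
    fun h => countingSigma_le_iff.2 fun A hA => ?_⟩
  obtain ⟨U, hUH, hU, rfl⟩ := h A hA
  obtain ⟨V, hVH, hV, hVdisj, hVU⟩ := hH.exists_pairwiseDisjoint_sUnion_eq hUH hU
  exact hVU ▸ measurable_NA_sUnion hV hVdisj fun B hB => measurable_NA (hVH hB)
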